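/- Let A be a normal disjunctive bounded distributive lattice. Then the map a ↦ a^♯ = {M ∈ S(A) : a ∈ M} is a lattice isomorphism from A onto its image, a meet-dense sublattice of the lattice of closed sets of the maximal spectrum S(A). -/

import Mathlib

/-- `F` is a (lattice) filter: contains `⊤`, is upward closed, and closed under meets. -/
def IsLatticeFilter {A : Type*} [Lattice A] [BoundedOrder A] (F : Set A) : Prop :=
  ⊤ ∈ F ∧ (∀ a b : A, a ∈ F → a ≤ b → b ∈ F) ∧ (∀ a b : A, a ∈ F → b ∈ F → a ⊓ b ∈ F)

/-- `F` is a maximal proper filter. -/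
def IsMaximalFilter {A : Type*} [Lattice A] [BoundedOrder A] (F : Set A) : Prop :=
  IsLatticeFilter F ∧ (⊥ : A) ∉ F ∧
    ∀ G : Set A, IsLatticeFilter G → (⊥ : A) ∉ G → F ⊆ G → G = F

/-- The maximal spectrum of `A`: the set of maximal proper filters of `A`. -/
def MaxSpectrum (A : Type*) [Lattice A] [BoundedOrder A] : Type _ :=
  {M : Set A // IsMaximalFilter M}

/-- The basic closed set `a^♯ = {M ∈ S(A) : a ∈ M}`. -/
def sharp {A : Type*} [Lattice A] [BoundedOrder A] (a : A) : Set (MaxSpectrum A) :=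
  {M : MaxSpectrum A | a ∈ M.1}

/-- The topology on the maximal spectrum, with the sets `a^♯` as a base for the
closed sets. -/
def spectrumTopology (A : Type*) [Lattice A] [BoundedOrder A] :
    TopologicalSpace (MaxSpectrum A) :=
  TopologicalSpace.generateFrom {s | ∃ a : A, s = (sharp a)ᶜ}

/-!
Maximal filters of a distributive lattice are prime, so `a ↦ a^♯` preserves finite meets and
joins. Disjunctivity makes it injective: for `a ≠ b` it provides `c ≠ ⊥` below one of them and
disjoint from the other, and the maximal filters above `c` tell `a^♯` and `b^♯` apart. Since the
sets `a^♯` are closed under finite unions and contain `∅ = ⊥^♯`, their complements form a basis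
of the topology, so every closed set is the intersection of the sets `a^♯` containing it.
-/

open Set TopologicalSpace

instance {A : Type*} [Lattice A] [BoundedOrder A] : TopologicalSpace (MaxSpectrum A) :=
  spectrumTopology A

theorem TopologicalSpace.IsTopologicalBasis.eq_biInter_of_isClosed {X ι : Type*}
    [TopologicalSpace X] {f : ι → Set X} (hB : IsTopologicalBasis (range fun i ↦ (f i)ᶜ))
    {C : Set X} (hC : IsClosed C) : C = ⋂ i ∈ {i | C ⊆ f i}, f i := by
  refine Subset.antisymm (subset_iInter₂ fun i hi ↦ hi) fun x hx ↦ ?_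
  by_contra hxC
  obtain ⟨_, ⟨i, rfl⟩, hxi, hiC⟩ := hB.exists_subset_of_mem_open hxC hC.isOpen_compl
  exact hxi (mem_iInter₂.1 hx i (compl_subset_compl.1 hiC))

def IsDisjunctive (A : Type*) [Lattice A] [BoundedOrder A] : Prop :=
  ∀ a b : A, a ≠ b → ∃ c : A, c ≠ ⊥ ∧ ((c ≤ a ∧ c ⊓ b = ⊥) ∨ (c ≤ b ∧ c ⊓ a = ⊥))

section Lattice

variable {A : Type*} [Lattice A] [BoundedOrder A]

theorem isLatticeFilter_Ici (c : A) : IsLatticeFilter (Ici c) :=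
  ⟨le_top, fun _ _ hc hab ↦ hc.trans hab, fun _ _ ha hb ↦ le_inf ha hb⟩

theorem IsLatticeFilter.sUnion_of_isChain {c : Set (Set A)} (hF : ∀ F ∈ c, IsLatticeFilter F)
    (hc : IsChain (· ⊆ ·) c) (hne : c.Nonempty) : IsLatticeFilter (⋃₀ c) := by
  refine ⟨?_, ?_, ?_⟩
  · obtain ⟨F, hF'⟩ := hne
    exact ⟨F, hF', (hF F hF').1⟩
  · rintro a b ⟨F, hF', ha⟩ hab
    exact ⟨F, hF', (hF F hF').2.1 a b ha hab⟩
  · rintro a b ⟨F, hF', ha⟩ ⟨G, hG, hb⟩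
    rcases hc.total hF' hG with h | h
    · exact ⟨G, hG, (hF G hG).2.2 a b (h ha) hb⟩
    · exact ⟨F, hF', (hF F hF').2.2 a b ha (h hb)⟩

theorem IsLatticeFilter.exists_isMaximalFilter_superset {F : Set A} (hF : IsLatticeFilter F)
    (hbot : (⊥ : A) ∉ F) : ∃ M, IsMaximalFilter M ∧ F ⊆ M := by
  obtain ⟨M, hFM, hM⟩ := zorn_subset_nonempty {G : Set A | IsLatticeFilter G ∧ (⊥ : A) ∉ G}
    (fun c hcS hc hne ↦ ⟨⋃₀ c,
      ⟨.sUnion_of_isChain (fun G hG ↦ (hcS hG).1) hc hne,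
        fun ⟨G, hG, hbG⟩ ↦ (hcS hG).2 hbG⟩,
      fun _ ↦ subset_sUnion_of_mem⟩) F ⟨hF, hbot⟩
  exact ⟨M, ⟨hM.1.1, hM.1.2, fun G hG hbG hMG ↦ (hM.eq_of_le ⟨hG, hbG⟩ hMG).symm⟩, hFM⟩

namespace IsMaximalFilter

variable {M : Set A}

theorem top_mem (hM : IsMaximalFilter M) : ⊤ ∈ M := hM.1.1

theorem bot_notMem (hM : IsMaximalFilter M) : ⊥ ∉ M := hM.2.1

theorem mem_of_le (hM : IsMaximalFilter M) {a b : A} (ha : a ∈ M) (hab : a ≤ b) : b ∈ M :=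
  hM.1.2.1 a b ha hab

theorem inf_mem (hM : IsMaximalFilter M) {a b : A} (ha : a ∈ M) (hb : b ∈ M) : a ⊓ b ∈ M :=
  hM.1.2.2 a b ha hb

theorem inf_mem_iff (hM : IsMaximalFilter M) {a b : A} : a ⊓ b ∈ M ↔ a ∈ M ∧ b ∈ M :=
  ⟨fun h ↦ ⟨hM.mem_of_le h inf_le_left, hM.mem_of_le h inf_le_right⟩,
    fun h ↦ hM.inf_mem h.1 h.2⟩

/-- Otherwise the filter generated by `M ∪ {a}` would be a proper filter strictly above `M`. -/
theorem exists_inf_eq_bot_of_notMem (hM : IsMaximalFilter M) {a : A} (ha : a ∉ M) :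
    ∃ m ∈ M, m ⊓ a = ⊥ := by
  by_contra! h
  let G : Set A := {x | ∃ m ∈ M, m ⊓ a ≤ x}
  have hG : IsLatticeFilter G := by
    refine ⟨⟨⊤, hM.top_mem, le_top⟩, fun x y ⟨m, hm, hmx⟩ hxy ↦ ⟨m, hm, hmx.trans hxy⟩, ?_⟩
    rintro x y ⟨m, hm, hmx⟩ ⟨n, hn, hny⟩
    exact ⟨m ⊓ n, hM.inf_mem hm hn, le_inf ((inf_le_inf_right a inf_le_left).trans hmx)
      ((inf_le_inf_right a inf_le_right).trans hny)⟩
  have hGbot : (⊥ : A) ∉ G := fun ⟨m, hm, hmbot⟩ ↦ h m hm (le_bot_iff.mp hmbot)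
  have hGM : G = M := hM.2.2 G hG hGbot fun x hx ↦ ⟨x, hx, inf_le_left⟩
  exact ha (hGM ▸ ⟨⊤, hM.top_mem, inf_le_right⟩)

end IsMaximalFilter

theorem sharp_mono : Monotone (sharp (A := A)) :=
  fun _ _ hab M hM ↦ M.2.mem_of_le hM hab

theorem sharp_inf (a b : A) : sharp (a ⊓ b) = sharp a ∩ sharp b :=
  ext fun M ↦ M.2.inf_mem_iff

@[simp]
theorem sharp_bot : sharp (⊥ : A) = ∅ :=
  eq_empty_of_forall_notMem fun M ↦ M.2.bot_notMem

@[simp]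
theorem sharp_top : sharp (⊤ : A) = univ :=
  eq_univ_of_forall fun M ↦ M.2.top_mem

theorem sharp_nonempty {c : A} (hc : c ≠ ⊥) : (sharp c).Nonempty := by
  obtain ⟨M, hM, hcM⟩ := (isLatticeFilter_Ici c).exists_isMaximalFilter_superset
    (fun h ↦ hc (le_bot_iff.mp h))
  exact ⟨⟨M, hM⟩, hcM le_rfl⟩

theorem sharp_injective (hdisj : IsDisjunctive A) : Function.Injective (sharp (A := A)) := by
  have separate : ∀ {a b c : A}, c ≠ ⊥ → c ≤ a → c ⊓ b = ⊥ → sharp a ≠ sharp b := by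
    intro a b c hc hca hcb hab
    have hcb' : sharp c ⊆ sharp b := hab ▸ sharp_mono hca
    have : sharp c = ∅ := by rw [← sharp_bot, ← hcb, sharp_inf, inter_eq_left.2 hcb']
    exact (sharp_nonempty hc).ne_empty this
  intro a b hab
  by_contra hne
  obtain ⟨c, hc, ⟨hca, hcb⟩ | ⟨hcb, hca⟩⟩ := hdisj a b hne
  · exact separate hc hca hcb hab
  · exact separate hc hcb hca hab.symm

theorem isClosed_sharp (a : A) : IsClosed (sharp a) :=
  ⟨GenerateOpen.basic _ ⟨a, rfl⟩⟩

end Lattice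

section DistribLattice

variable {A : Type*} [DistribLattice A] [BoundedOrder A]

theorem IsMaximalFilter.mem_or_mem_of_sup_mem {M : Set A} (hM : IsMaximalFilter M) {a b : A}
    (hab : a ⊔ b ∈ M) : a ∈ M ∨ b ∈ M := by
  by_contra! h
  obtain ⟨m, hm, hma⟩ := hM.exists_inf_eq_bot_of_notMem h.1
  obtain ⟨n, hn, hnb⟩ := hM.exists_inf_eq_bot_of_notMem h.2
  have hmna : m ⊓ n ⊓ a = ⊥ := le_bot_iff.1 (hma ▸ inf_le_inf_right a inf_le_left)
  have hmnb : m ⊓ n ⊓ b = ⊥ := le_bot_iff.1 (hnb ▸ inf_le_inf_right b inf_le_right)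
  have hdisjoint : m ⊓ n ⊓ (a ⊔ b) = ⊥ := by rw [inf_sup_left, hmna, hmnb, sup_bot_eq]
  exact hM.bot_notMem (hdisjoint ▸ hM.inf_mem (hM.inf_mem hm hn) hab)

theorem sharp_sup (a b : A) : sharp (a ⊔ b) = sharp a ∪ sharp b :=
  ext fun M ↦ ⟨M.2.mem_or_mem_of_sup_mem,
    fun h ↦ h.elim (M.2.mem_of_le · le_sup_left) (M.2.mem_of_le · le_sup_right)⟩

theorem isTopologicalBasis_compl_sharp :
    IsTopologicalBasis (range fun a : A ↦ (sharp a)ᶜ) where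
  exists_subset_inter := by
    rintro _ ⟨a, rfl⟩ _ ⟨b, rfl⟩ M hM
    have : (sharp (a ⊔ b))ᶜ = (sharp a)ᶜ ∩ (sharp b)ᶜ := by rw [sharp_sup, compl_union]
    exact ⟨_, ⟨a ⊔ b, rfl⟩, this.superset hM, this.subset⟩
  sUnion_eq := sUnion_eq_univ_iff.2 fun _ ↦ ⟨_, ⟨⊥, rfl⟩, by simp⟩
  eq_generateFrom := congrArg generateFrom <| ext fun _ ↦ exists_congr fun _ ↦ eq_comm

theorem eq_biInter_sharp_of_isClosed {C : Set (MaxSpectrum A)} (hC : IsClosed C) :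
    C = ⋂ a ∈ {a | C ⊆ sharp a}, sharp a :=
  isTopologicalBasis_compl_sharp.eq_biInter_of_isClosed hC

end DistribLattice

theorem sharp_lattice_embedding_meet_dense_general {A : Type*} [DistribLattice A] [BoundedOrder A]
    (hdisj : ∀ a b : A, a ≠ b → ∃ c : A, c ≠ ⊥ ∧
      ((c ≤ a ∧ c ⊓ b = ⊥) ∨ (c ≤ b ∧ c ⊓ a = ⊥))) :
    Function.Injective (sharp (A := A)) ∧
      (∀ a b : A, sharp (a ⊓ b) = sharp a ∩ sharp b) ∧
      (∀ a b : A, sharp (a ⊔ b) = sharp a ∪ sharp b) ∧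
      sharp (⊥ : A) = (∅ : Set (MaxSpectrum A)) ∧
      sharp (⊤ : A) = (Set.univ : Set (MaxSpectrum A)) ∧
      (∀ a : A, @IsClosed _ (spectrumTopology A) (sharp a)) ∧
      (∀ C : Set (MaxSpectrum A), @IsClosed _ (spectrumTopology A) C →
        ∃ S : Set A, C = ⋂ a ∈ S, sharp a) :=
  ⟨sharp_injective hdisj, sharp_inf, sharp_sup, sharp_bot, sharp_top, isClosed_sharp,
    fun _ hC ↦ ⟨_, eq_biInter_sharp_of_isClosed hC⟩⟩

/-- For a normal disjunctive bounded distributive lattice `A`, the map `a ↦ a^♯` is a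
lattice isomorphism of `A` onto its image, a meet-dense sublattice of the lattice of
closed sets of `S(A)`. -/
theorem sharp_lattice_embedding_meet_dense {A : Type*} [DistribLattice A] [BoundedOrder A]
    (hnorm : ∀ a b : A, a ⊓ b = ⊥ →
      ∃ a' b' : A, a ⊓ a' = ⊥ ∧ b ⊓ b' = ⊥ ∧ a' ⊔ b' = ⊤)
    (hdisj : ∀ a b : A, a ≠ b → ∃ c : A, c ≠ ⊥ ∧
      ((c ≤ a ∧ c ⊓ b = ⊥) ∨ (c ≤ b ∧ c ⊓ a = ⊥))) :
    Function.Injective (sharp (A := A)) ∧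
      (∀ a b : A, sharp (a ⊓ b) = sharp a ∩ sharp b) ∧
      (∀ a b : A, sharp (a ⊔ b) = sharp a ∪ sharp b) ∧
      sharp (⊥ : A) = (∅ : Set (MaxSpectrum A)) ∧
      sharp (⊤ : A) = (Set.univ : Set (MaxSpectrum A)) ∧
      (∀ a : A, @IsClosed _ (spectrumTopology A) (sharp a)) ∧
      (∀ C : Set (MaxSpectrum A), @IsClosed _ (spectrumTopology A) C →
        ∃ S : Set A, C = ⋂ a ∈ S, sharp a) :=
  sharp_lattice_embedding_meet_dense_general hdisj
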